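/- If φ is an eigenfunction of the linearized Euler operator L about the Taylor-Green vortex with eigenvalue λ, then the shifted function φ̃(x1,x2) := φ(x1+π, x2) is an eigenfunction of L with eigenvalue -λ, since u_s(x1+π,x2) = -u_s(x1,x2) and ω_s(x1+π,x2) = -ω_s(x1,x2). -/
import Mathlib


open Real

/-- The linearized Euler operator about the Taylor-Green vortex applied pointwise to a
(complex-valued) scalar field `w` with stream function `ψw = Δ⁻¹ w`:
`L w = -(u_s·∇)w - (∇⊥ψw)·∇ω_s`. -/
noncomputable def TGLinC (w ψw : ℝ → ℝ → ℂ) (x1 x2 : ℝ) : ℂ :=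
  -(((-Real.cos x1 * Real.sin x2 : ℝ) : ℂ) * deriv (fun y : ℝ => w y x2) x1
      + ((Real.sin x1 * Real.cos x2 : ℝ) : ℂ) * deriv (fun y : ℝ => w x1 y) x2)
    - ((-(deriv (fun y : ℝ => ψw x1 y) x2))
          * ((deriv (fun y : ℝ => 2 * Real.cos y * Real.cos x2) x1 : ℝ) : ℂ)
        + (deriv (fun y : ℝ => ψw y x2) x1)
          * ((deriv (fun y : ℝ => 2 * Real.cos x1 * Real.cos y) x2 : ℝ) : ℂ))

lemma tg_deriv_omega1 (x1 x2 : ℝ) :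
    deriv (fun y : ℝ => 2 * Real.cos y * Real.cos x2) x1
      = -2 * Real.sin x1 * Real.cos x2 := by
  have h : (fun y : ℝ => 2 * Real.cos y * Real.cos x2)
      = fun y : ℝ => (2 * Real.cos x2) * Real.cos y := by funext y; ring
  rw [h, deriv_const_mul _ (Real.differentiable_cos x1), Real.deriv_cos]
  ring

lemma tg_deriv_omega2 (x1 x2 : ℝ) :
    deriv (fun y : ℝ => 2 * Real.cos x1 * Real.cos y) x2
      = -2 * Real.cos x1 * Real.sin x2 := by
  rw [deriv_const_mul _ (Real.differentiable_cos x2), Real.deriv_cos]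
  ring

/-- If `φ` is an eigenfunction of the linearized Euler operator `L` about the
Taylor-Green vortex with eigenvalue `λ`, then the shifted function
`φ̃(x₁,x₂) := φ(x₁+π, x₂)` is an eigenfunction of `L` with eigenvalue `-λ`. -/
theorem taylor_green_eigenfunction_shift
    (φ ψ : ℝ → ℝ → ℂ) (lam : ℂ)
    (hφ : ContDiff ℝ (⊤ : ℕ∞) (fun p : ℝ × ℝ => φ p.1 p.2))
    (hψ : ContDiff ℝ (⊤ : ℕ∞) (fun p : ℝ × ℝ => ψ p.1 p.2))
    (hstream : ∀ x1 x2 : ℝ,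
      deriv (deriv (fun y : ℝ => ψ y x2)) x1 + deriv (deriv (fun y : ℝ => ψ x1 y)) x2
        = φ x1 x2)
    (hnz : ∃ x1 x2 : ℝ, φ x1 x2 ≠ 0)
    (heig : ∀ x1 x2 : ℝ, TGLinC φ ψ x1 x2 = lam * φ x1 x2) :
    (∀ x1 x2 : ℝ,
      deriv (deriv (fun y : ℝ => ψ (y + π) x2)) x1
          + deriv (deriv (fun y : ℝ => ψ (x1 + π) y)) x2
        = φ (x1 + π) x2)
    ∧ (∀ x1 x2 : ℝ,
        TGLinC (fun a b => φ (a + π) b) (fun a b => ψ (a + π) b) x1 x2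
          = (-lam) * φ (x1 + π) x2) := by
  constructor
  · intro x1 x2
    have h1 : deriv (fun y : ℝ => ψ (y + π) x2)
        = fun y : ℝ => deriv (fun z : ℝ => ψ z x2) (y + π) := by
      funext y; exact deriv_comp_add_const (fun z : ℝ => ψ z x2) π y
    rw [h1, deriv_comp_add_const]
    exact hstream (x1 + π) x2
  · intro x1 x2
    have h := heig (x1 + π) x2
    unfold TGLinC at h ⊢
    have hφ1 : deriv (fun y : ℝ => φ (y + π) x2) x1
        = deriv (fun y : ℝ => φ y x2) (x1 + π) := deriv_comp_add_const (fun z : ℝ => φ z x2) π x1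
    have hψ1 : deriv (fun y : ℝ => ψ (y + π) x2) x1
        = deriv (fun y : ℝ => ψ y x2) (x1 + π) := deriv_comp_add_const (fun z : ℝ => ψ z x2) π x1
    rw [hφ1, hψ1, tg_deriv_omega1, tg_deriv_omega2] at *
    rw [Real.cos_add_pi, Real.sin_add_pi] at h
    push_cast at h ⊢
    linear_combination -h
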